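/- Let ω = exp(2πi/3), ℤ[ω] = {a + bω : a, b ∈ ℤ} ⊆ ℂ, P₀ = (2 + ω)·ℤ[ω], and P = ℤ[ω] \ P₀. Let Γ be an additive subgroup of finite index in ℤ[ω]. Let f : ℂ → ℂ be a map of the form f(z) = (1 + ω)^j·z or f(z) = (1 + ω)^j·conj(z) for some j ∈ {0, 1, 2, 3, 4, 5} (these are the origin-fixing symmetries of the (3⁶) tiling). Suppose that f permutes the color classes of P: for every coset X of Γ in ℤ[ω] with X ∩ P ≠ ∅, there exists a coset Y of Γ with f(X ∩ P) = Y ∩ P. Then f(Γ) = Γ. -/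
import Mathlib


/-- The primitive cube root of unity `ω = exp(2πi/3)`. -/
noncomputable def ω : ℂ := Complex.exp (2 * (Real.pi : ℂ) * Complex.I / 3)

/-- The Eisenstein integers `ℤ[ω]`, viewed as a subset of `ℂ`. -/
noncomputable def ZW : Set ℂ := {z : ℂ | ∃ a b : ℤ, z = (a : ℂ) + (b : ℂ) * ω}

/-- The ideal `P₀ = (2 + ω)·ℤ[ω]`, the set of vertices of the `(3⁶)` tiling. -/
noncomputable def P₀ : Set ℂ := {z : ℂ | ∃ y ∈ ZW, z = (2 + ω) * y}

/-- The cosets of a subset `Γ` in `ℤ[ω]`. -/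
noncomputable def cosets (Γ : Set ℂ) : Set (Set ℂ) :=
  {X : Set ℂ | ∃ t ∈ ZW, X = {z : ℂ | z - t ∈ Γ}}

lemma omega_prim : IsPrimitiveRoot ω 3 := by
  have := Complex.isPrimitiveRoot_exp 3 (by norm_num)
  simpa [ω] using this

lemma omega_cube : ω ^ 3 = 1 := omega_prim.pow_eq_one

lemma omega_ne_one : ω ≠ 1 := omega_prim.ne_one (by norm_num)

lemma omega_quad : ω ^ 2 + ω + 1 = 0 := by
  have h : (ω - 1) * (ω ^ 2 + ω + 1) = 0 := by linear_combination omega_cube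
  rcases mul_eq_zero.mp h with h' | h'
  · exact absurd (sub_eq_zero.mp h') omega_ne_one
  · exact h'

lemma omega_sq : ω ^ 2 = -1 - ω := by linear_combination omega_quad

lemma omega_ne_zero : ω ≠ 0 := by
  intro h
  have := omega_cube
  rw [h] at this
  norm_num at this

lemma omega_im_ne : ω.im ≠ 0 := by
  intro h
  have hre : ω = (ω.re : ℂ) := Complex.ext (by simp) (by simp [h])
  have h2 : ((ω.re ^ 2 + ω.re + 1 : ℝ) : ℂ) = 0 := by
    push_cast
    rw [← hre]
    exact omega_quad
  have h3 : ω.re ^ 2 + ω.re + 1 = 0 := by exact_mod_cast h2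
  nlinarith [sq_nonneg (ω.re + 1/2)]

lemma conj_omega : (starRingEnd ℂ) ω = -1 - ω := by
  have h1 : (starRingEnd ℂ) ω = Complex.exp (-(2 * (Real.pi : ℂ) * Complex.I / 3)) := by
    rw [ω, ← Complex.exp_conj]
    congr 1
    have : (starRingEnd ℂ) (Real.pi : ℂ) = (Real.pi : ℂ) := Complex.conj_ofReal _
    rw [map_div₀, map_mul, map_mul, Complex.conj_I, this, map_ofNat, map_ofNat]
    ring
  have hmul : ω * (starRingEnd ℂ) ω = 1 := by
    rw [h1, ω, ← Complex.exp_add]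
    rw [add_neg_cancel, Complex.exp_zero]
  have hmul2 : ω * (-1 - ω) = 1 := by linear_combination -omega_quad
  exact mul_left_cancel₀ omega_ne_zero (hmul.trans hmul2.symm)

lemma mem_ZW (a b : ℤ) : ((a : ℂ) + (b : ℂ) * ω) ∈ ZW := ⟨a, b, rfl⟩

lemma ZW_add {x y : ℂ} (hx : x ∈ ZW) (hy : y ∈ ZW) : x + y ∈ ZW := by
  obtain ⟨a, b, rfl⟩ := hx
  obtain ⟨c, d, rfl⟩ := hy
  refine ⟨a + c, b + d, by push_cast; ring⟩

lemma ZW_sub {x y : ℂ} (hx : x ∈ ZW) (hy : y ∈ ZW) : x - y ∈ ZW := by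
  obtain ⟨a, b, rfl⟩ := hx
  obtain ⟨c, d, rfl⟩ := hy
  refine ⟨a - c, b - d, by push_cast; ring⟩

lemma ZW_one : (1 : ℂ) ∈ ZW := ⟨1, 0, by push_cast; ring⟩

lemma ZW_two : (2 : ℂ) ∈ ZW := ⟨2, 0, by push_cast; ring⟩

lemma mulu_ZW {z : ℂ} (hz : z ∈ ZW) : (1 + ω) * z ∈ ZW := by
  obtain ⟨a, b, rfl⟩ := hz
  refine ⟨a - b, a, ?_⟩
  push_cast
  linear_combination (b : ℂ) * omega_sq

lemma powu_ZW (j : ℕ) {z : ℂ} (hz : z ∈ ZW) : (1 + ω) ^ j * z ∈ ZW := by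
  induction j with
  | zero => simpa using hz
  | succ n ih =>
    have : (1 + ω) ^ (n + 1) * z = (1 + ω) * ((1 + ω) ^ n * z) := by ring
    rw [this]
    exact mulu_ZW ih

lemma conj_ZW {z : ℂ} (hz : z ∈ ZW) : (starRingEnd ℂ) z ∈ ZW := by
  obtain ⟨a, b, rfl⟩ := hz
  refine ⟨a - b, -b, ?_⟩
  rw [map_add, map_mul]
  rw [conj_omega]
  have ha : (starRingEnd ℂ) ((a : ℂ)) = (a : ℂ) := by
    rw [← Complex.ofReal_intCast, Complex.conj_ofReal]
  have hb : (starRingEnd ℂ) ((b : ℂ)) = (b : ℂ) := by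
    rw [← Complex.ofReal_intCast, Complex.conj_ofReal]
  rw [ha, hb]
  push_cast
  ring

lemma mulnegω_ZW {z : ℂ} (hz : z ∈ ZW) : -ω * z ∈ ZW := by
  obtain ⟨a, b, rfl⟩ := hz
  refine ⟨b, b - a, ?_⟩
  push_cast
  linear_combination -(b : ℂ) * omega_sq

lemma u_pow_six : (1 + ω) ^ 6 = 1 := by
  have h2 : (1 + ω) ^ 2 = ω := by linear_combination omega_quad
  calc (1 + ω) ^ 6 = ((1 + ω) ^ 2) ^ 3 := by ring
    _ = ω ^ 3 := by rw [h2]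
    _ = 1 := omega_cube

lemma conj_u : (starRingEnd ℂ) (1 + ω) = -ω := by
  rw [map_add, map_one, conj_omega]; ring

lemma P₀_sub {x y : ℂ} (hx : x ∈ P₀) (hy : y ∈ P₀) : x - y ∈ P₀ := by
  obtain ⟨a, ha, rfl⟩ := hx
  obtain ⟨b, hb, rfl⟩ := hy
  exact ⟨a - b, ZW_sub ha hb, by ring⟩

lemma int_P₀ {n : ℤ} (h : ((n : ℤ) : ℂ) ∈ P₀) : (3 : ℤ) ∣ n := by
  obtain ⟨y, ⟨c, d, rfl⟩, hy⟩ := h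
  have h' : ((n : ℤ) : ℂ) = ((2 * c - d : ℤ) : ℂ) + ((c + d : ℤ) : ℂ) * ω := by
    rw [hy]; push_cast
    linear_combination (d : ℂ) * omega_sq
  have him : (0 : ℝ) = ((c + d : ℤ) : ℝ) * ω.im := by
    have := congrArg Complex.im h'
    simpa using this
  have hcd : (c : ℤ) + d = 0 := by
    by_contra hne
    have hne' : ((c + d : ℤ) : ℝ) ≠ 0 := Int.cast_ne_zero.mpr hne
    exact omega_im_ne (by
      have := him.symm
      rcases mul_eq_zero.mp this with h | h
      · exact absurd h hne'
      · exact h)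
  have hz : ((c + d : ℤ) : ℂ) = 0 := by exact_mod_cast hcd
  rw [hz, zero_mul, add_zero] at h'
  have h1 : (n : ℤ) = 2 * c - d := by exact_mod_cast h'
  omega

lemma one_not_P₀ : (1 : ℂ) ∉ P₀ := by
  intro h
  have := int_P₀ (n := 1) (by exact_mod_cast h)
  omega

lemma two_not_P₀ : (2 : ℂ) ∉ P₀ := by
  intro h
  have := int_P₀ (n := 2) (by exact_mod_cast h)
  omega

lemma mulu_P₀ {z : ℂ} (hz : z ∈ P₀) : (1 + ω) * z ∈ P₀ := by
  obtain ⟨y, hy, rfl⟩ := hz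
  exact ⟨(1 + ω) * y, mulu_ZW hy, by ring⟩

lemma powu_P₀ (j : ℕ) {z : ℂ} (hz : z ∈ P₀) : (1 + ω) ^ j * z ∈ P₀ := by
  induction j with
  | zero => simpa using hz
  | succ n ih =>
    have : (1 + ω) ^ (n + 1) * z = (1 + ω) * ((1 + ω) ^ n * z) := by ring
    rw [this]
    exact mulu_P₀ ih

lemma conj_P₀ {z : ℂ} (hz : z ∈ P₀) : (starRingEnd ℂ) z ∈ P₀ := by
  obtain ⟨y, hy, rfl⟩ := hz
  refine ⟨-ω * (starRingEnd ℂ) y, mulnegω_ZW (conj_ZW hy), ?_⟩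
  rw [map_mul, map_add, conj_omega]
  have h2 : (starRingEnd ℂ) (2 : ℂ) = 2 := map_ofNat _ 2
  rw [h2]
  linear_combination (starRingEnd ℂ) y * omega_sq

/-- Let `Γ` be an additive subgroup of finite index in `ℤ[ω]`, let
`P = ℤ[ω] \ P₀` be the set of centers of the `(3⁶)` tiling, and let `f` be an
origin-fixing symmetry of the `(3⁶)` tiling, i.e. `f(z) = (1+ω)^j·z` or
`f(z) = (1+ω)^j·conj(z)` with `0 ≤ j ≤ 5`.  If `f` permutes the color classes
`X ∩ P` (`X` a coset of `Γ` meeting `P`), then `f(Γ) = Γ`. -/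
theorem stmt12 (Γ : Set ℂ) (h0 : (0 : ℂ) ∈ Γ)
    (hadd : ∀ x ∈ Γ, ∀ y ∈ Γ, x + y ∈ Γ) (hneg : ∀ x ∈ Γ, -x ∈ Γ)
    (hΓZW : Γ ⊆ ZW) (m : ℕ) (hm : 0 < m) (hidx : Nat.card (cosets Γ) = m)
    (f : ℂ → ℂ)
    (hf : ∃ j : ℕ, j ≤ 5 ∧
      ((∀ z, f z = (1 + ω) ^ j * z) ∨ (∀ z, f z = (1 + ω) ^ j * (starRingEnd ℂ) z)))
    (hperm : ∀ t ∈ ZW, ({z : ℂ | z - t ∈ Γ} ∩ (ZW \ P₀)).Nonempty →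
      ∃ t' ∈ ZW,
        f '' ({z : ℂ | z - t ∈ Γ} ∩ (ZW \ P₀)) = {z : ℂ | z - t' ∈ Γ} ∩ (ZW \ P₀)) :
    f '' Γ = Γ := by
  obtain ⟨j, hj, hcase⟩ := hf
  -- basic properties of f
  have fadd : ∀ x y, f (x + y) = f x + f y := by
    rcases hcase with h | h
    · intro x y; rw [h, h, h]; ring
    · intro x y; rw [h, h, h, map_add]; ring
  have fZW : ∀ z ∈ ZW, f z ∈ ZW := by
    rcases hcase with h | h
    · intro z hz; rw [h]; exact powu_ZW j hz
    · intro z hz; rw [h]; exact powu_ZW j (conj_ZW hz)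
  have fP₀ : ∀ z ∈ P₀, f z ∈ P₀ := by
    rcases hcase with h | h
    · intro z hz; rw [h]; exact powu_P₀ j hz
    · intro z hz; rw [h]; exact powu_P₀ j (conj_P₀ hz)
  -- inverse g
  obtain ⟨g, hgZW, hfg⟩ :
      ∃ g : ℂ → ℂ, (∀ z ∈ ZW, g z ∈ ZW) ∧ (∀ z, f (g z) = z) := by
    rcases hcase with h | h
    · refine ⟨fun z => (1 + ω) ^ (6 - j) * z, fun z hz => powu_ZW _ hz, fun z => ?_⟩
      rw [h]
      have : (1 + ω) ^ j * ((1 + ω) ^ (6 - j) * z) = (1 + ω) ^ (j + (6 - j)) * z := by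
        rw [pow_add]; ring
      rw [this]
      have hj6 : j + (6 - j) = 6 := by omega
      rw [hj6, u_pow_six, one_mul]
    · refine ⟨f, fun z hz => fZW z hz, fun z => ?_⟩
      rw [h, h, map_mul]
      have h1 : (starRingEnd ℂ) ((1 + ω) ^ j) = (-ω) ^ j := by
        rw [map_pow, conj_u]
      rw [h1, Complex.conj_conj]
      have h2 : (1 + ω) ^ j * ((-ω) ^ j * z) = ((1 + ω) * (-ω)) ^ j * z := by
        rw [mul_pow]; ring
      rw [h2]
      have h3 : (1 + ω) * (-ω) = 1 := by linear_combination -omega_quad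
      rw [h3, one_pow, one_mul]
  -- the key lemma
  have key : ∀ c, c ∈ ZW → c ∉ P₀ →
      (∀ γ ∈ Γ, c + f γ ∉ P₀ → f γ ∈ Γ) ∧ (∀ δ ∈ Γ, c + δ ∉ P₀ → δ ∈ f '' Γ) := by
    intro c hcZW hcP
    set t := g c with ht
    have htZW : t ∈ ZW := hgZW c hcZW
    have hft : f t = c := hfg c
    have htP : t ∉ P₀ := fun h => hcP (hft ▸ fP₀ t h)
    have hmem : t ∈ {z : ℂ | z - t ∈ Γ} ∩ (ZW \ P₀) := by
      refine ⟨by simp [h0], htZW, htP⟩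
    obtain ⟨t', ht'ZW, heq⟩ := hperm t htZW ⟨t, hmem⟩
    have hc_mem : c ∈ {z : ℂ | z - t' ∈ Γ} ∩ (ZW \ P₀) := by
      rw [← heq]
      exact ⟨t, hmem, hft⟩
    have hct' : c - t' ∈ Γ := hc_mem.1
    constructor
    · intro γ hγ hfγ
      have hfγZW : f γ ∈ ZW := fZW γ (hΓZW hγ)
      have h1 : t + γ ∈ {z : ℂ | z - t ∈ Γ} ∩ (ZW \ P₀) := by
        refine ⟨by simp [hγ], ZW_add htZW (hΓZW hγ), fun h => ?_⟩
        have : f (t + γ) ∈ P₀ := fP₀ _ h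
        rw [fadd, hft] at this
        exact hfγ this
      have h2 : f (t + γ) ∈ {z : ℂ | z - t' ∈ Γ} ∩ (ZW \ P₀) := by
        rw [← heq]; exact ⟨t + γ, h1, rfl⟩
      have h3 : c + f γ - t' ∈ Γ := by
        have := h2.1
        rwa [fadd, hft] at this
      have h4 : f γ = (c + f γ - t') + (-(c - t')) := by ring
      rw [h4]
      exact hadd _ h3 _ (hneg _ hct')
    · intro δ hδ hδP
      have h1 : c + δ ∈ {z : ℂ | z - t' ∈ Γ} ∩ (ZW \ P₀) := by
        refine ⟨?_, ZW_add hcZW (hΓZW hδ), hδP⟩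
        have : c + δ - t' = (c - t') + δ := by ring
        simp only [Set.mem_setOf_eq, this]
        exact hadd _ hct' _ hδ
      rw [← heq] at h1
      obtain ⟨x, ⟨hx1, hx2⟩, hx3⟩ := h1
      have hx1' : x - t ∈ Γ := hx1
      have h5 : f x = f t + f (x - t) := by
        rw [← fadd]; congr 1; ring
      have h6 : f (x - t) = δ := by
        have h7 : f t + f (x - t) = c + δ := by rw [← h5, hx3]
        rw [hft] at h7
        exact add_left_cancel h7
      exact ⟨x - t, hx1', h6⟩
  -- picking c ∈ {1, 2}
  have pick : ∀ w : ℂ, ∃ c, c ∈ ZW ∧ c ∉ P₀ ∧ c + w ∉ P₀ := by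
    intro w
    by_cases h1 : (1 : ℂ) + w ∈ P₀
    · refine ⟨2, ZW_two, two_not_P₀, fun h2 => ?_⟩
      have h3 : (2 : ℂ) + w - (1 + w) ∈ P₀ := P₀_sub h2 h1
      have h4 : (2 : ℂ) + w - (1 + w) = 1 := by ring
      rw [h4] at h3
      exact one_not_P₀ h3
    · exact ⟨1, ZW_one, one_not_P₀, h1⟩
  ext z
  constructor
  · rintro ⟨γ, hγ, rfl⟩
    obtain ⟨c, hc1, hc2, hc3⟩ := pick (f γ)
    exact (key c hc1 hc2).1 γ hγ hc3
  · intro hz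
    obtain ⟨c, hc1, hc2, hc3⟩ := pick z
    exact (key c hc1 hc2).2 z hz hc3
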